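/- arXiv:2009.09268 — 6 statements merged into one kernel-verified Lean document; each statement's English description precedes it below -/
import Mathlib

section
/- Let n = 2 and let c ∈ F_{2^2} with c ≠ 0 and c ≠ 1. Then for all a, b ∈ F_{2^2}, the c-DDT entry of the (0,1)-swapped inverse function satisfies Δ_c(a,b) ≤ 1 (i.e., G is perfect c-nonlinear). -/
open Finset

/-- The (0,1)-swapped inverse function on a field of characteristic 2 with `2^n` elements:
`G(x) = x^(2^n-2) + x^(2^n-1) + (x+1)^(2^n-1)`. -/
def swappedInv {F : Type*} [Field F] (n : ℕ) (x : F) : F :=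
  x ^ (2 ^ n - 2) + x ^ (2 ^ n - 1) + (x + 1) ^ (2 ^ n - 1)

/-- The `c`-DDT entry of the swapped inverse function at `(a, b)`:
the number of `x` with `G(x+a) + c·G(x) = b`. -/
def cDDT (F : Type*) [Field F] [Fintype F] [DecidableEq F] (n : ℕ) (c a b : F) : ℕ :=
  (univ.filter (fun x : F => swappedInv n (x + a) + c * swappedInv n x = b)).card

/-- The `c`-BCT entry of the swapped inverse function at `(a, b)`:
the number of pairs `(x, γ)` with `G(x+γ) + c·G(x) = b` and `G(x+γ+a) + c⁻¹·G(x+a) = b`. -/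
def cBCT (F : Type*) [Field F] [Fintype F] [DecidableEq F] (n : ℕ) (c a b : F) : ℕ :=
  (univ.filter (fun p : F × F =>
    swappedInv n (p.1 + p.2) + c * swappedInv n p.1 = b ∧
    swappedInv n (p.1 + p.2 + a) + c⁻¹ * swappedInv n (p.1 + a) = b)).card

/-- The absolute trace map on a field with `2^n` elements: `Tr(x) = ∑_{i=0}^{n-1} x^(2^i)`. -/
def trF {F : Type*} [Field F] (n : ℕ) (x : F) : F :=
  ∑ i ∈ Finset.range n, x ^ (2 ^ i)

theorem stmt_0 (F : Type*) [Field F] [Fintype F] [DecidableEq F]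
    (hF : Fintype.card F = 2 ^ 2)
    (c : F) (hc0 : c ≠ 0) (hc1 : c ≠ 1) :
    ∀ a b : F, cDDT F 2 c a b ≤ 1 := by
  have h4 : (4 : F) = 0 := by
    have := FiniteField.cast_card_eq_zero F
    rw [hF] at this; exact_mod_cast this
  have h2 : (2 : F) = 0 := by
    have : (2 : F) ^ 2 = 0 := by linear_combination h4
    exact pow_eq_zero_iff (by norm_num) |>.mp this
  have hG : ∀ x : F, swappedInv 2 x = x + 1 := by
    intro x
    show x ^ (2^2-2) + x ^ (2^2-1) + (x+1) ^ (2^2-1) = x + 1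
    norm_num
    linear_combination (x^3 + 2*x^2 + x) * h2
  have hc1' : c + 1 ≠ 0 := by
    intro h
    apply hc1
    linear_combination h - h2
  intro a b
  apply Finset.card_le_one.mpr
  intro x hx y hy
  simp only [Finset.mem_filter, hG] at hx hy
  have hxy : (c + 1) * (x - y) = 0 := by linear_combination hx.2 - hy.2
  rcases mul_eq_zero.mp hxy with h | h
  · exact absurd h hc1'
  · exact sub_eq_zero.mp h
end

section
/- Let n ≥ 4 and let c ∈ F_{2^n} with c ≠ 0 and c ≠ 1. Then for all a, b ∈ F_{2^n}, the c-DDT entry of the (0,1)-swapped inverse function satisfies Δ_c(a,b) ≤ 4; in particular, the c-differential uniformity of G is at most 4. -/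
open Finset

open Polynomial
section Aux

variable {F : Type*} [Field F] [Fintype F] [DecidableEq F] {n : ℕ}

lemma charTwoF (hn : 1 ≤ n) (hF : Fintype.card F = 2 ^ n) : CharP F 2 := by
  have h2 : (2 : F) = 0 := by
    have := FiniteField.cast_card_eq_zero F
    rw [hF] at this
    push_cast at this
    exact pow_eq_zero_iff (by omega) |>.mp this
  have hd : ringChar F ∣ 2 := (CharP.cast_eq_zero_iff F (ringChar F) 2).mp (by exact_mod_cast h2)
  rcases Nat.Prime.eq_one_or_self_of_dvd Nat.prime_two _ hd with h | h
  · exact absurd h CharP.ringChar_ne_one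
  · exact h ▸ ringChar.charP F

lemma addTwo [CharP F 2] (x y : F) (h : x + y = 0) : x = y := by
  have := eq_neg_of_add_eq_zero_left h
  rwa [CharTwo.neg_eq] at this

lemma swappedInv_zero (hn : 2 ≤ n) : swappedInv n (0 : F) = 1 := by
  have h4 : 4 ≤ 2 ^ n := by calc 4 = 2 ^ 2 := rfl
                                 _ ≤ 2 ^ n := Nat.pow_le_pow_right (by norm_num) hn
  simp [swappedInv, zero_pow (show 2 ^ n - 2 ≠ 0 by omega), zero_pow (show 2 ^ n - 1 ≠ 0 by omega)]

lemma swappedInv_one [CharP F 2] (hn : 2 ≤ n) : swappedInv n (1 : F) = 0 := by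
  have h4 : 4 ≤ 2 ^ n := by calc 4 = 2 ^ 2 := rfl
                                 _ ≤ 2 ^ n := Nat.pow_le_pow_right (by norm_num) hn
  have h11 : (1 : F) + 1 = 0 := CharTwo.add_self_eq_zero 1
  simp [swappedInv, h11, zero_pow (show 2 ^ n - 1 ≠ 0 by omega)]

lemma swappedInv_ne [CharP F 2] (hn : 2 ≤ n) (hF : Fintype.card F = 2 ^ n)
    (x : F) (hx0 : x ≠ 0) (hx1 : x ≠ 1) : swappedInv n x = x⁻¹ := by
  have h4 : 4 ≤ 2 ^ n := by calc 4 = 2 ^ 2 := rfl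
                                 _ ≤ 2 ^ n := Nat.pow_le_pow_right (by norm_num) hn
  have hx1' : x + 1 ≠ 0 := fun h => hx1 (addTwo x 1 h)
  have e1 : x ^ (2 ^ n - 1) = 1 := by
    have := FiniteField.pow_card_sub_one_eq_one x hx0
    rwa [hF] at this
  have e2 : (x + 1) ^ (2 ^ n - 1) = 1 := by
    have := FiniteField.pow_card_sub_one_eq_one (x + 1) hx1'
    rwa [hF] at this
  have e3 : x ^ (2 ^ n - 2) = x⁻¹ := by
    refine eq_inv_of_mul_eq_one_left ?_
    have : x ^ (2 ^ n - 2) * x = x ^ (2 ^ n - 1) := by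
      rw [← pow_succ]
      congr 1
      omega
    rw [this, e1]
  rw [swappedInv, e1, e2, e3, add_assoc, CharTwo.add_self_eq_zero, add_zero]

lemma swappedInv_injective [CharP F 2] (hn : 2 ≤ n) (hF : Fintype.card F = 2 ^ n) :
    Function.Injective (swappedInv (F := F) n) := by
  have key : ∀ x : F, swappedInv n (swappedInv n x) = x := by
    intro x
    by_cases hx0 : x = 0
    · rw [hx0, swappedInv_zero hn, swappedInv_one hn]
    by_cases hx1 : x = 1
    · rw [hx1, swappedInv_one hn, swappedInv_zero hn]
    · rw [swappedInv_ne hn hF x hx0 hx1,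
        swappedInv_ne hn hF _ (inv_ne_zero hx0) (fun h => hx1 (by
          rw [inv_eq_one] at h; exact h)), inv_inv]
  exact Function.LeftInverse.injective key

end Aux

theorem stmt_2 (n : ℕ) (hn : 4 ≤ n) (F : Type*) [Field F] [Fintype F] [DecidableEq F]
    (hF : Fintype.card F = 2 ^ n)
    (c : F) (hc0 : c ≠ 0) (hc1 : c ≠ 1) :
    ∀ a b : F, cDDT F n c a b ≤ 4 := by
  intro a b
  haveI : CharP F 2 := charTwoF (by omega) hF
  have hn2 : 2 ≤ n := by omega
  have h2 : (2 : F) = 0 := CharTwo.two_eq_zero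
  have hc1' : c + 1 ≠ 0 := fun h => hc1 (addTwo c 1 h)
  rw [cDDT]
  set S := univ.filter (fun x : F => swappedInv n (x + a) + c * swappedInv n x = b) with hSdef
  have hmem : ∀ x : F, x ∈ S ↔ swappedInv n (x + a) + c * swappedInv n x = b := by
    intro x; simp [hSdef]
  by_cases ha0 : a = 0
  · refine le_trans (Finset.card_le_one.mpr ?_) (by norm_num)
    intro x hx y hy
    rw [hmem] at hx hy
    rw [ha0, add_zero] at hx hy
    have hx' : (1 + c) * swappedInv n x = (1 + c) * swappedInv n y := by
      linear_combination hx - hy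
    have h1c : (1 : F) + c ≠ 0 := fun h => hc1' (by linear_combination h)
    exact swappedInv_injective hn2 hF (mul_left_cancel₀ h1c hx')
  -- a ≠ 0
  set P : Polynomial F := Polynomial.C b * Polynomial.X ^ 2
      + Polynomial.C (a * b + c + 1) * Polynomial.X + Polynomial.C (c * a) with hPdef
  have hP0 : P ≠ 0 := by
    intro h
    have hb : b = 0 := by
      have := congrArg (fun q => Polynomial.coeff q 2) h
      simpa [hPdef, Polynomial.coeff_one, Polynomial.coeff_C] using this
    have h1 : a * b + c + 1 = 0 := by
      have := congrArg (fun q => Polynomial.coeff q 1) h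
      simpa [hPdef, Polynomial.coeff_one, Polynomial.coeff_C] using this
    rw [hb, mul_zero, zero_add] at h1
    exact hc1' h1
  have hA2 : P.roots.toFinset.card ≤ 2 :=
    le_trans (le_trans (Multiset.toFinset_card_le _) (Polynomial.card_roots' P))
      Polynomial.natDegree_quadratic_le
  have hgen : ∀ x ∈ S, x ≠ 0 → x ≠ 1 → x ≠ a → x ≠ a + 1 → x ∈ P.roots.toFinset := by
    intro x hx hx0 hx1 hxa hxa1
    rw [hmem] at hx
    have hxa0 : x + a ≠ 0 := fun h => hxa (addTwo _ _ h)
    have hxa1' : x + a ≠ 1 := by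
      intro h
      apply hxa1
      have h' : x + a + a = 1 + a := by rw [h]
      rwa [add_assoc, CharTwo.add_self_eq_zero, add_zero, add_comm] at h'
    rw [swappedInv_ne hn2 hF _ hxa0 hxa1', swappedInv_ne hn2 hF _ hx0 hx1] at hx
    rw [Multiset.mem_toFinset, Polynomial.mem_roots hP0]
    show P.eval x = 0
    rw [hPdef]
    simp only [Polynomial.eval_add, Polynomial.eval_mul, Polynomial.eval_pow,
      Polynomial.eval_C, Polynomial.eval_X]
    field_simp at hx
    linear_combination hx + (b * x ^ 2 + a * b * x) * h2
  by_cases ha1 : a = 1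
  · have haa : a + 1 = (0 : F) := by rw [ha1]; exact CharTwo.add_self_eq_zero 1
    have hsub : S ⊆ P.roots.toFinset ∪ {0, 1} := by
      intro x hx
      by_cases hx0 : x = 0
      · exact Finset.mem_union_right _ (by simp [hx0])
      by_cases hx1 : x = 1
      · exact Finset.mem_union_right _ (by simp [hx1])
      · exact Finset.mem_union_left _
          (hgen x hx hx0 hx1 (fun h => hx1 (h.trans ha1)) (fun h => hx0 (h.trans haa)))
    calc S.card ≤ (P.roots.toFinset ∪ {0, 1}).card := Finset.card_le_card hsub
      _ ≤ P.roots.toFinset.card + ({0, 1} : Finset F).card := Finset.card_union_le _ _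
      _ ≤ 2 + 2 := by
          gcongr
          exact le_trans (Finset.card_insert_le _ _) (by simp)
      _ = 4 := rfl
  -- a ≠ 0, a ≠ 1
  · have ha1' : a + 1 ≠ 0 := fun h => ha1 (addTwo a 1 h)
    have hB : (S ∩ {0, a}).card ≤ 1 := by
      have key : ¬((0 : F) ∈ S ∧ a ∈ S) := by
        rintro ⟨h0, ha⟩
        rw [hmem] at h0 ha
        rw [zero_add, swappedInv_zero hn2, swappedInv_ne hn2 hF a ha0 ha1, mul_one] at h0
        rw [CharTwo.add_self_eq_zero, swappedInv_zero hn2,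
          swappedInv_ne hn2 hF a ha0 ha1] at ha
        have e : a⁻¹ + c = 1 + c * a⁻¹ := h0.trans ha.symm
        field_simp at e
        have hz : (a + 1) * (c + 1) = 0 := by linear_combination e + (a + c) * h2
        rcases mul_eq_zero.mp hz with h | h
        · exact ha1 (addTwo a 1 h)
        · exact hc1 (addTwo c 1 h)
      rw [Finset.card_le_one]
      intro u hu v hv
      rw [Finset.mem_inter, Finset.mem_insert, Finset.mem_singleton] at hu hv
      rcases hu.2 with hu2 | hu2 <;> rcases hv.2 with hv2 | hv2 <;> subst hu2 <;> subst hv2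
      · rfl
      · exact absurd ⟨hu.1, hv.1⟩ key
      · exact absurd ⟨hv.1, hu.1⟩ key
      · rfl
    have hC : (S ∩ {1, a + 1}).card ≤ 1 := by
      have key : ¬((1 : F) ∈ S ∧ a + 1 ∈ S) := by
        rintro ⟨h1, ha⟩
        rw [hmem] at h1 ha
        have h1a0 : (1 : F) + a ≠ 0 := fun h => ha1 (addTwo 1 a h).symm
        have h1a1 : (1 : F) + a ≠ 1 := fun h => ha0 (by linear_combination h)
        rw [swappedInv_ne hn2 hF _ h1a0 h1a1, swappedInv_one hn2, mul_zero, add_zero] at h1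
        have e1 : a + 1 + a = (1 : F) := by
          rw [add_right_comm, CharTwo.add_self_eq_zero, zero_add]
        rw [e1, swappedInv_one hn2,
          swappedInv_ne hn2 hF _ ha1' (fun h => ha0 (by linear_combination h)),
          zero_add] at ha
        rw [add_comm 1 a] at h1
        have e : (1 : F) * (a + 1)⁻¹ = c * (a + 1)⁻¹ := by
          rw [one_mul]; exact h1.trans ha.symm
        exact hc1 (mul_right_cancel₀ (inv_ne_zero ha1') e).symm
      rw [Finset.card_le_one]
      intro u hu v hv
      rw [Finset.mem_inter, Finset.mem_insert, Finset.mem_singleton] at hu hv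
      rcases hu.2 with hu2 | hu2 <;> rcases hv.2 with hv2 | hv2 <;> subst hu2 <;> subst hv2
      · rfl
      · exact absurd ⟨hu.1, hv.1⟩ key
      · exact absurd ⟨hv.1, hu.1⟩ key
      · rfl
    have hsub : S ⊆ P.roots.toFinset ∪ (S ∩ {0, a}) ∪ (S ∩ {1, a + 1}) := by
      intro x hx
      by_cases hx0 : x = 0
      · exact Finset.mem_union_left _ (Finset.mem_union_right _
          (Finset.mem_inter.mpr ⟨hx, by simp [hx0]⟩))
      by_cases hxa : x = a
      · exact Finset.mem_union_left _ (Finset.mem_union_right _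
          (Finset.mem_inter.mpr ⟨hx, by simp [hxa]⟩))
      by_cases hx1 : x = 1
      · exact Finset.mem_union_right _ (Finset.mem_inter.mpr ⟨hx, by simp [hx1]⟩)
      by_cases hxa1 : x = a + 1
      · exact Finset.mem_union_right _ (Finset.mem_inter.mpr ⟨hx, by simp [hxa1]⟩)
      · exact Finset.mem_union_left _ (Finset.mem_union_left _
          (hgen x hx hx0 hx1 hxa hxa1))
    calc S.card ≤ (P.roots.toFinset ∪ (S ∩ {0, a}) ∪ (S ∩ {1, a + 1})).card :=
          Finset.card_le_card hsub
      _ ≤ (P.roots.toFinset ∪ (S ∩ {0, a})).card + (S ∩ {1, a + 1}).card :=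
          Finset.card_union_le _ _
      _ ≤ P.roots.toFinset.card + (S ∩ {0, a}).card + (S ∩ {1, a + 1}).card := by
          gcongr
          exact Finset.card_union_le _ _
      _ ≤ 2 + 1 + 1 := by gcongr
      _ = 4 := rfl
end

section
/- Let n ≥ 2 and let c ∈ F_{2^n} with c ≠ 0 and c ≠ 1. Then the c-DDT entry of the (0,1)-swapped inverse function at (a,b) = (1,c) satisfies Δ_c(1, c) = 3 if Tr(c) = 0, and Δ_c(1, c) = 1 if Tr(c) = 1. -/
open Finset

section Aux

variable {F : Type*} [Field F]

lemma trF_add (n : ℕ) [CharP F 2] (x y : F) : trF n (x + y) = trF n x + trF n y := by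
  simp only [trF, ← Finset.sum_add_distrib]
  exact Finset.sum_congr rfl fun i _ => add_pow_char_pow ..

lemma trF_sq (n : ℕ) [Fintype F] (hF : Fintype.card F = 2 ^ n) (x : F) :
    trF n (x ^ 2) = trF n x := by
  have hfr : x ^ (2 : ℕ) ^ n = x := by
    have := FiniteField.pow_card x; rwa [hF] at this
  have key : ∀ i : ℕ, (x ^ 2) ^ (2 : ℕ) ^ i = x ^ 2 ^ (i + 1) := by
    intro i; rw [← pow_mul, pow_succ, mul_comm]
  have h1 : trF n (x ^ 2) + x = trF n x + x := by
    calc trF n (x ^ 2) + x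
        = (∑ i ∈ Finset.range n, x ^ 2 ^ (i + 1)) + x ^ 2 ^ 0 := by
          simp [trF, key]
      _ = ∑ i ∈ Finset.range (n + 1), x ^ 2 ^ i :=
          (Finset.sum_range_succ' (fun i => x ^ 2 ^ i) n).symm
      _ = (∑ i ∈ Finset.range n, x ^ 2 ^ i) + x ^ 2 ^ n := Finset.sum_range_succ _ n
      _ = trF n x + x := by rw [hfr]; rfl
  exact add_right_cancel h1

lemma trF_artinschreier (n : ℕ) [Fintype F] [CharP F 2] (hF : Fintype.card F = 2 ^ n) (y : F) :
    trF n (y ^ 2 + y) = 0 := by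
  rw [trF_add, trF_sq n hF, CharTwo.add_self_eq_zero]

lemma trF_exists_artinschreier (n : ℕ) [Fintype F] [DecidableEq F] [CharP F 2]
    (hn : 1 ≤ n) (hF : Fintype.card F = 2 ^ n) {d : F} (hd : trF n d = 0) :
    ∃ y : F, y ^ 2 + y = d := by
  classical
  set f : F → F := fun y => y ^ 2 + y with hf
  set I : Finset F := Finset.image f Finset.univ with hI
  set Z : Finset F := Finset.univ.filter (fun x => trF n x = 0) with hZdef
  have hIZ : I ⊆ Z := by
    intro b hb
    simp only [hI, Finset.mem_image, Finset.mem_univ, true_and] at hb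
    obtain ⟨y, rfl⟩ := hb
    simp only [hZdef, Finset.mem_filter, Finset.mem_univ, true_and]
    exact trF_artinschreier n hF y
  -- card Z ≤ 2^(n-1) via polynomial roots
  have hZcard : Z.card ≤ 2 ^ (n - 1) := by
    set P : Polynomial F := ∑ i ∈ Finset.range n, Polynomial.X ^ (2 ^ i) with hP
    have hcoeff : P.coeff 1 = 1 := by
      rw [hP, Polynomial.finset_sum_coeff]
      rw [Finset.sum_congr rfl (fun i _ => Polynomial.coeff_X_pow (2 ^ i) 1)]
      have : ∀ i ∈ Finset.range n, (if (1 : ℕ) = 2 ^ i then (1 : F) else 0)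
          = if i = 0 then (1 : F) else 0 := by
        intro i _
        rcases eq_or_ne i 0 with h | h
        · simp [h]
        · have h1 : 1 < 2 ^ i := Nat.one_lt_pow h (by norm_num)
          rw [if_neg (by omega), if_neg h]
      have h0n : 0 ∈ Finset.range n := Finset.mem_range.mpr (by omega)
      rw [Finset.sum_congr rfl this, Finset.sum_ite_eq' (Finset.range n) 0 (fun _ => (1 : F)),
        if_pos h0n]
    have hPne : P ≠ 0 := fun h => by simp [h] at hcoeff
    have hdeg : P.natDegree ≤ 2 ^ (n - 1) := by
      refine Polynomial.natDegree_sum_le_of_forall_le _ _ (fun i hi => ?_)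
      rw [Polynomial.natDegree_X_pow]
      exact Nat.pow_le_pow_right (by norm_num) (by simp only [Finset.mem_range] at hi; omega)
    have hsub : Z ⊆ P.roots.toFinset := by
      intro x hx
      simp only [hZdef, Finset.mem_filter, Finset.mem_univ, true_and] at hx
      rw [Multiset.mem_toFinset, Polynomial.mem_roots hPne]
      simp only [Polynomial.IsRoot, hP, Polynomial.eval_finset_sum, Polynomial.eval_pow,
        Polynomial.eval_X]
      exact hx
    calc Z.card ≤ P.roots.toFinset.card := Finset.card_le_card hsub
      _ ≤ Multiset.card P.roots := Multiset.toFinset_card_le _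
      _ ≤ P.natDegree := Polynomial.card_roots' P
      _ ≤ 2 ^ (n - 1) := hdeg
  -- fibers of f have at most 2 elements
  have hfib : ∀ b ∈ Finset.univ.image f,
      (Finset.univ.filter (fun x => f x = b)).card ≤ 2 := by
    intro b hb
    simp only [Finset.mem_image, Finset.mem_univ, true_and] at hb
    obtain ⟨y, hy⟩ := hb
    have h2 : (2 : F) = 0 := CharTwo.two_eq_zero
    have : Finset.univ.filter (fun x => f x = b) ⊆ {y, y + 1} := by
      intro z hz
      simp only [Finset.mem_filter, Finset.mem_univ, true_and] at hz
      have hzy : (z + y) * (z + y + 1) = 0 := by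
        have e : f z = f y := by rw [hz, hy]
        simp only [hf] at e
        linear_combination e + (z * y + y ^ 2 + y) * h2
      rcases mul_eq_zero.mp hzy with h | h
      · have : z = y := by linear_combination h - y * h2
        simp [this]
      · have : z = y + 1 := by linear_combination h - y * h2 - h2
        simp [this]
    calc (Finset.univ.filter (fun x => f x = b)).card ≤ ({y, y + 1} : Finset F).card :=
        Finset.card_le_card this
      _ ≤ 2 := by
        refine le_trans (Finset.card_insert_le _ _) ?_
        simp
  have hIcard : 2 ^ (n - 1) ≤ I.card := by
    have := Finset.card_le_mul_card_image (f := f) Finset.univ 2 hfib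
    rw [Finset.card_univ, hF, ← hI] at this
    have h2n : 2 ^ n = 2 * 2 ^ (n - 1) := by
      rw [← pow_succ']; congr 1; omega
    omega
  have hZI : Z = I := (Finset.eq_of_subset_of_card_le hIZ (le_trans hZcard hIcard)).symm
  have hdZ : d ∈ Z := by
    simp only [hZdef, Finset.mem_filter, Finset.mem_univ, true_and]; exact hd
  rw [hZI] at hdZ
  simp only [hI, Finset.mem_image, Finset.mem_univ, true_and] at hdZ
  obtain ⟨y, hy⟩ := hdZ
  exact ⟨y, hy⟩

end Aux

theorem stmt_9 (n : ℕ) (hn : 2 ≤ n) (F : Type*) [Field F] [Fintype F] [DecidableEq F]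
    (hF : Fintype.card F = 2 ^ n)
    (c : F) (hc0 : c ≠ 0) (hc1 : c ≠ 1) :
    (trF n c = 0 → cDDT F n c 1 c = 3) ∧ (trF n c = 1 → cDDT F n c 1 c = 1) := by
  classical
  -- characteristic 2
  have h2 : (2 : F) = 0 := by
    have h0 : ((Fintype.card F : ℕ) : F) = 0 := FiniteField.cast_card_eq_zero F
    rw [hF] at h0
    push_cast at h0
    exact pow_eq_zero_iff (by omega) |>.mp h0
  haveI hchar : CharP F 2 := CharTwo.of_one_ne_zero_of_two_eq_zero one_ne_zero h2
  have hq4 : 4 ≤ 2 ^ n := by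
    calc (4 : ℕ) = 2 ^ 2 := by norm_num
      _ ≤ 2 ^ n := Nat.pow_le_pow_right (by norm_num) hn
  have e1ne : 2 ^ n - 2 ≠ 0 := by omega
  have e2ne : 2 ^ n - 1 ≠ 0 := by omega
  -- values of swappedInv
  have hG0 : swappedInv n (0 : F) = 1 := by
    simp [swappedInv, zero_pow e1ne, zero_pow e2ne]
  have hG1 : swappedInv n (1 : F) = 0 := by
    have : (1 : F) + 1 = 0 := by rw [one_add_one_eq_two, h2]
    simp [swappedInv, this, zero_pow e2ne, CharTwo.add_self_eq_zero]
  have hGx : ∀ x : F, x ≠ 0 → x ≠ 1 → swappedInv n x = x⁻¹ := by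
    intro x hx0 hx1
    have hx1' : x + 1 ≠ 0 := by
      intro h
      exact hx1 (by linear_combination h - h2)
    have e1 : x ^ (2 ^ n - 1) = 1 := by
      have := FiniteField.pow_card_sub_one_eq_one x hx0; rwa [hF] at this
    have e2 : (x + 1) ^ (2 ^ n - 1) = 1 := by
      have := FiniteField.pow_card_sub_one_eq_one (x + 1) hx1'; rwa [hF] at this
    have e3 : x ^ (2 ^ n - 2) = x⁻¹ := by
      have h : x ^ (2 ^ n - 2) * x = 1 := by
        rw [← pow_succ]
        rw [show 2 ^ n - 2 + 1 = 2 ^ n - 1 by omega]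
        exact e1
      exact eq_inv_of_mul_eq_one_left (by rw [mul_comm] at h ⊢; exact h)
    rw [swappedInv, e1, e2, e3, add_assoc, CharTwo.add_self_eq_zero, add_zero]
  -- membership characterization
  have hmem : ∀ x : F, (swappedInv n (x + 1) + c * swappedInv n x = c)
      ↔ (x = 0 ∨ c * x ^ 2 + x + c = 0) := by
    intro x
    by_cases hx0 : x = 0
    · subst hx0
      simp [hG1, hG0]
    by_cases hx1 : x = 1
    · subst hx1
      have h11 : (1 : F) + 1 = 0 := by rw [one_add_one_eq_two, h2]
      rw [h11, hG0, hG1, mul_zero, add_zero]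
      constructor
      · intro h; exact absurd h.symm hc1
      · rintro (h | h)
        · exact absurd h one_ne_zero
        · exfalso
          have : (1 : F) = 0 := by linear_combination h - c * h2
          exact one_ne_zero this
    · have hx1' : x + 1 ≠ 0 := fun h => hx1 (by linear_combination h - h2)
      have hx1'' : x + 1 ≠ 1 := by
        intro h; exact hx0 (by linear_combination h)
      rw [hGx (x + 1) hx1' hx1'', hGx x hx0 hx1]
      have hmul : x * (x + 1) ≠ 0 := mul_ne_zero hx0 hx1'
      have expand : ((x + 1)⁻¹ + c * x⁻¹) * (x * (x + 1)) = x + c * (x + 1) := by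
        rw [add_mul,
          show (x + 1)⁻¹ * (x * (x + 1)) = x * ((x + 1) * (x + 1)⁻¹) by ring,
          mul_inv_cancel₀ hx1', mul_one,
          show c * x⁻¹ * (x * (x + 1)) = c * (x + 1) * (x * x⁻¹) by ring,
          mul_inv_cancel₀ hx0, mul_one]
      constructor
      · intro h
        right
        have h' : ((x + 1)⁻¹ + c * x⁻¹) * (x * (x + 1)) = c * (x * (x + 1)) := by rw [h]
        rw [expand] at h'
        linear_combination h' + (c * x ^ 2) * h2
      · rintro (h | h)
        · exact absurd h hx0
        · have h' : ((x + 1)⁻¹ + c * x⁻¹) * (x * (x + 1)) = c * (x * (x + 1)) := by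
            rw [expand]
            linear_combination h - (c * x ^ 2) * h2
          exact mul_right_cancel₀ hmul h'
  -- the solution set
  set T : Finset F := Finset.univ.filter (fun x => c * x ^ 2 + x + c = 0) with hT
  have h0T : (0 : F) ∉ T := by
    simp only [hT, Finset.mem_filter, Finset.mem_univ, true_and]
    intro h
    exact hc0 (by linear_combination h)
  have hSeq : Finset.univ.filter
      (fun x : F => swappedInv n (x + 1) + c * swappedInv n x = c) = insert 0 T := by
    ext x
    simp only [Finset.mem_filter, Finset.mem_univ, true_and, Finset.mem_insert, hT, hmem x]
  have hcard : cDDT F n c 1 c = T.card + 1 := by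
    rw [cDDT, hSeq, Finset.card_insert_of_notMem h0T]
  constructor
  · -- trace 0 case
    intro htr
    have htr2 : trF n (c ^ 2) = 0 := by rw [trF_sq n hF]; exact htr
    obtain ⟨y, hy⟩ := trF_exists_artinschreier n (by omega) hF htr2
    have hcu : c * c⁻¹ = 1 := mul_inv_cancel₀ hc0
    have hroot : c * (y * c⁻¹) ^ 2 + (y * c⁻¹) + c = 0 := by
      linear_combination c⁻¹ * hy + (c⁻¹ * y ^ 2 + c) * hcu + c * h2
    set x0 : F := y * c⁻¹ with hx0def
    have hroot2 : c * (x0 + c⁻¹) ^ 2 + (x0 + c⁻¹) + c = 0 := by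
      linear_combination hroot + c⁻¹ * hcu + (c * x0 * c⁻¹ + c⁻¹) * h2
    have hTeq : T = {x0, x0 + c⁻¹} := by
      ext x
      simp only [hT, Finset.mem_filter, Finset.mem_univ, true_and, Finset.mem_insert,
        Finset.mem_singleton]
      constructor
      · intro hx
        have hd : (x + x0) * (c * (x + x0) + 1) = 0 := by
          linear_combination hx + hroot + (c * x * x0 - c) * h2
        rcases mul_eq_zero.mp hd with h | h
        · left; linear_combination h - x0 * h2
        · right
          have h1' : (x + x0) * c = 1 := by linear_combination h - h2
          have h1'' : x + x0 = c⁻¹ := eq_inv_of_mul_eq_one_left h1'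
          linear_combination h1'' - x0 * h2
      · rintro (rfl | rfl)
        · exact hroot
        · exact hroot2
    have hdist : x0 ≠ x0 + c⁻¹ := by
      intro h
      have : c⁻¹ = 0 := by linear_combination -h
      exact inv_ne_zero hc0 this
    rw [hcard, hTeq, Finset.card_insert_of_notMem (by simpa using hdist),
      Finset.card_singleton]
  · -- trace 1 case
    intro htr
    have hTempty : T = ∅ := by
      rw [Finset.eq_empty_iff_forall_notMem]
      intro x hx
      simp only [hT, Finset.mem_filter, Finset.mem_univ, true_and] at hx
      have hy : (c * x) ^ 2 + (c * x) = c ^ 2 := by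
        linear_combination c * hx - c ^ 2 * h2
      have h0 : trF n (c ^ 2) = 0 := by
        rw [← hy]; exact trF_artinschreier n hF (c * x)
      rw [trF_sq n hF, htr] at h0
      exact one_ne_zero h0
    rw [hcard, hTempty, Finset.card_empty]
end

section
/- Let n = 2 and let c ∈ F_{2^2} with c ≠ 0 and c ≠ 1. Then for all nonzero a, b ∈ F_{2^2}, the c-BCT entry of the (0,1)-swapped inverse function satisfies B_c(a,b) = 1. -/
open Finset

theorem stmt_11 (F : Type*) [Field F] [Fintype F] [DecidableEq F]
    (hF : Fintype.card F = 2 ^ 2)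
    (c : F) (hc0 : c ≠ 0) (hc1 : c ≠ 1) :
    ∀ a b : F, a ≠ 0 → b ≠ 0 → cBCT F 2 c a b = 1 := by
  -- characteristic is 2
  obtain ⟨m, hp, hcard⟩ := FiniteField.card F (ringChar F)
  have hring : ringChar F = 2 := by
    have hdvd : ringChar F ∣ 2 ^ 2 := by
      rw [← hF, hcard]; exact dvd_pow_self _ m.2.ne'
    have := hp.dvd_of_dvd_pow hdvd
    exact (Nat.prime_dvd_prime_iff_eq hp Nat.prime_two).mp this
  have htwo : (2 : F) = 0 := by
    have : CharP F 2 := hring ▸ ringChar.charP F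
    exact CharP.cast_eq_zero F 2
  have hG : ∀ x : F, swappedInv 2 x = x + 1 := by
    intro x
    show x ^ (2^2-2) + x ^ (2^2-1) + (x+1) ^ (2^2-1) = x + 1
    norm_num
    linear_combination (x ^ 3 + x ^ 2 + x + x^2) * htwo
  intro a b ha hb
  have hcinv : c * c⁻¹ = 1 := mul_inv_cancel₀ hc0
  have hd : c + c⁻¹ ≠ 0 := by
    intro h
    apply hc1
    have hsq : (c + 1) * (c + 1) = 0 := by
      linear_combination c * h - hcinv + c * htwo
    have h1 : c + 1 = 0 := by
      rcases mul_eq_zero.mp hsq with h' | h' <;> exact h'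
    linear_combination h1 - htwo
  set d := c + c⁻¹ with hddef
  set s := a + c + c⁻¹ * (a + 1) with hsdef
  set x0 := d⁻¹ * s with hx0
  set y0 := b + x0 + 1 + c * (x0 + 1) with hy0
  have hdx0 : d * x0 = s := by
    rw [hx0, ← mul_assoc, mul_inv_cancel₀ hd, one_mul]
  unfold cBCT
  have : (univ.filter (fun p : F × F =>
      swappedInv 2 (p.1 + p.2) + c * swappedInv 2 p.1 = b ∧
      swappedInv 2 (p.1 + p.2 + a) + c⁻¹ * swappedInv 2 (p.1 + a) = b)) = {(x0, y0)} := by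
    ext ⟨x, y⟩
    simp only [mem_filter, mem_univ, true_and, mem_singleton, Prod.mk.injEq, hG]
    constructor
    · rintro ⟨h1, h2⟩
      have hx : x = x0 := by
        have hdx : d * x = s := by
          rw [hddef, hsdef]
          linear_combination h1 - h2 + (c⁻¹ * x + c + c⁻¹ * a + c⁻¹ - (2*c + c⁻¹ + c⁻¹*a)) * htwo
        exact mul_left_cancel₀ hd (by rw [hdx, hdx0])
      refine ⟨hx, ?_⟩
      rw [hy0, ← hx]
      linear_combination -h1 + (x + y + 1 + c * x + c - (1 + x + x*c + c + b)) * htwo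
    · rintro ⟨hx, hy⟩
      subst hx; subst hy
      constructor
      · rw [hy0]; ring_nf; linear_combination (b + x0 + 1 + c * (x0+1) - b) * htwo
      · rw [hy0]
        have := hdx0
        rw [hddef, hsdef] at this
        linear_combination this + (x0 + b + 1 + c * x0 + c + a + 1 + c⁻¹ * x0 + c⁻¹ * a + c⁻¹ - (1 + 2*c*c⁻¹*(c+c⁻¹)⁻¹ + c*c⁻¹*(c+c⁻¹)⁻¹*a + c*(c+c⁻¹)⁻¹*a + c^2*(c+c⁻¹)⁻¹ + c⁻¹*(c+c⁻¹)⁻¹*a + c⁻¹^2*(c+c⁻¹)⁻¹ + c⁻¹^2*(c+c⁻¹)⁻¹*a + b)) * htwo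
  rw [this, card_singleton]
end

section
/- Let n ≥ 5 with n ≡ 0 (mod 5), and let c ∈ F_{2^n} satisfy c⁵ + c⁴ + c³ + c² + 1 = 0 (such c exists, and automatically c ≠ 0, 1 and c² + c + 1 ≠ 0). Then the c-BCT entry of the (0,1)-swapped inverse function satisfies B_c(a, b) = 5 for a = c/(c² + c + 1) and b = c² + c + 1. -/
open Finset

/-!
Writing `y = x + γ`, the entry counts the pairs `(x, y)` with `G y + c G x = b` and
`G (y + a) + c⁻¹ G (x + a) = b`, where `G` is `x ↦ x⁻¹` with the values at `0` and `1` exchanged.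
Here `c` generates the subfield `𝔽₃₂`, in which `a = c³ + 1` and `b = c² + c + 1`.
If none of `x, x + a, y, y + a` lies in `{0, 1}`, both equations are rational; cleared of
denominators, their sum is free of `xy` (characteristic 2), which gives `y = c²x + c`, and then
`x` solves a quadratic with the two roots `c` and `c³ + c² + 1`. Each of the eight remaining cases
pins `x` and `y` down to elements of `𝔽₃₂`, and evaluating the equations there leaves three more
solutions. Such a `c` exists because `5 ∣ n` puts all roots of `X ^ 32 - X` into `F`.
-/

open Function

section SwapInv

variable {F : Type*} [Field F] [DecidableEq F]

def swapInv (x : F) : F := if x = 0 then 1 else if x = 1 then 0 else x⁻¹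

@[simp] lemma swapInv_zero : swapInv (0 : F) = 1 := by simp [swapInv]

@[simp] lemma swapInv_one : swapInv (1 : F) = 0 := by simp [swapInv]

lemma swapInv_of_ne {x : F} (h0 : x ≠ 0) (h1 : x ≠ 1) : swapInv x = x⁻¹ := by
  simp [swapInv, h0, h1]

lemma swapInv_involutive : Involutive (swapInv : F → F) := by
  intro x
  by_cases h0 : x = 0
  · simp [h0]
  by_cases h1 : x = 1
  · simp [h1]
  rw [swapInv_of_ne h0 h1, swapInv_of_ne (inv_ne_zero h0) (inv_ne_one.mpr h1), inv_inv]

lemma swapInv_eq_of_mul_eq_one {x y : F} (h : x * y = 1) (hx : x ≠ 1) : swapInv x = y := by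
  rw [swapInv_of_ne (left_ne_zero_of_mul_eq_one h) hx, inv_eq_of_mul_eq_one_right h]

end SwapInv

section FiniteField

variable {F : Type*} [Field F] [Fintype F] {n : ℕ}

open Polynomial in
lemma exists_root_of_card (hF : Fintype.card F = 2 ^ n) (h5 : 5 ∣ n) :
    ∃ c : F, c ^ 5 + c ^ 4 + c ^ 3 + c ^ 2 + 1 = 0 := by
  have : CharP F 2 := charP_of_card_eq_prime_pow hF
  set P : F[X] := X ^ 5 + X ^ 4 + X ^ 3 + X ^ 2 + 1
  -- `P` is irreducible of degree 5 over `𝔽₂`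
  have hP : P ∣ X ^ 2 ^ 5 - X := ⟨X ^ 27 + X ^ 26 + X ^ 23 + X ^ 20 + X ^ 19 + X ^ 18 + X ^ 17 +
    X ^ 16 + X ^ 14 + X ^ 13 + X ^ 12 + X ^ 8 + X ^ 6 + X ^ 4 + X ^ 3 + X, by grind⟩
  have hsplits : Splits (X ^ 2 ^ n - X : F[X]) := by
    simpa [Nat.card_eq_fintype_card, hF] using splits_X_pow_nat_card_sub_X (K := F)
  have hne : (X ^ 2 ^ n - X : F[X]) ≠ 0 :=
    FiniteField.X_pow_card_sub_X_ne_zero F (hF ▸ Fintype.one_lt_card)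
  have hdeg : P.degree ≠ 0 := by rw [show P.degree = 5 by unfold P; compute_degree!]; decide
  obtain ⟨c, hc⟩ :=
    (hsplits.of_dvd hne (hP.trans (dvd_pow_pow_sub_self_of_dvd h5))).exists_eval_eq_zero hdeg
  exact ⟨c, by simpa [P] using hc⟩

variable [DecidableEq F]

lemma swappedInv_eq_swapInv (hF : Fintype.card F = 2 ^ n) (hn : 2 ≤ n) :
    (swappedInv n : F → F) = swapInv := by
  have : CharP F 2 := charP_of_card_eq_prime_pow hF
  have h4 : 4 ≤ 2 ^ n := by
    calc 4 = 2 ^ 2 := by norm_num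
      _ ≤ 2 ^ n := Nat.pow_le_pow_right two_pos hn
  have hpow : ∀ z : F, z ≠ 0 → z ^ (2 ^ n - 1) = 1 := fun z hz ↦
    hF ▸ FiniteField.pow_card_sub_one_eq_one z hz
  funext x
  by_cases h0 : x = 0
  · simp [swappedInv, h0, zero_pow (show 2 ^ n - 2 ≠ 0 by omega),
      zero_pow (show 2 ^ n - 1 ≠ 0 by omega)]
  by_cases h1 : x = 1
  · simp [swappedInv, h1, CharTwo.add_self_eq_zero, zero_pow (show 2 ^ n - 1 ≠ 0 by omega)]
  have hinv : x ^ (2 ^ n - 2) = x⁻¹ := by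
    refine eq_inv_of_mul_eq_one_left ?_
    rw [← pow_succ, show 2 ^ n - 2 + 1 = 2 ^ n - 1 by omega, hpow x h0]
  rw [swappedInv, swapInv_of_ne h0 h1, hinv, hpow x h0,
    hpow (x + 1) (by rwa [Ne, CharTwo.add_eq_zero]), CharTwo.add_cancel_right]

lemma cBCT_eq_card_filter_swapInv (hF : Fintype.card F = 2 ^ n) (hn : 2 ≤ n) (c a b : F) :
    cBCT F n c a b = #{p : F × F | swapInv p.2 + c * swapInv p.1 = b ∧
      swapInv (p.2 + a) + c⁻¹ * swapInv (p.1 + a) = b} := by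
  rw [cBCT, swappedInv_eq_swapInv hF hn]
  exact card_equiv ((Equiv.refl F).prodShear Equiv.addLeft) (by simp)

end FiniteField

section Root

variable {F : Type*} [Field F] [CharP F 2] {c : F}

lemma inv_eq_of_root (hc : c ^ 5 + c ^ 4 + c ^ 3 + c ^ 2 + 1 = 0) :
    c⁻¹ = c ^ 4 + c ^ 3 + c ^ 2 + c :=
  inv_eq_of_mul_eq_one_right (by grind)

lemma eq_of_cleared_eqns (hc : c ^ 5 + c ^ 4 + c ^ 3 + c ^ 2 + 1 = 0) {x y : F}
    (h1 : x + c * y = (c ^ 2 + c + 1) * (x * y))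
    (h2 : x + (c ^ 3 + 1) + (c ^ 4 + c ^ 3 + c ^ 2 + c) * (y + (c ^ 3 + 1)) =
      (c ^ 2 + c + 1) * ((x + (c ^ 3 + 1)) * (y + (c ^ 3 + 1)))) :
    x = c ∧ y = c ^ 3 + c ∨ x = c ^ 3 + c ^ 2 + 1 ∧ y = c ^ 3 + c + 1 := by
  have hlin : y = c ^ 2 * x + c := by linear_combination (norm := grind) c * h1 + c * h2
  subst hlin
  have hquad : (x + c) * (x + (c ^ 3 + c ^ 2 + 1)) = 0 := by grind
  rcases mul_eq_zero.mp hquad with h | h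
  · obtain rfl := CharTwo.add_eq_zero.mp h
    exact .inl ⟨rfl, by ring⟩
  · obtain rfl := CharTwo.add_eq_zero.mp h
    exact .inr ⟨rfl, by grind⟩

lemma eq_of_inv_eqns (hc : c ^ 5 + c ^ 4 + c ^ 3 + c ^ 2 + 1 = 0) {x y : F}
    (hx : x ≠ 0) (hxa : x + (c ^ 3 + 1) ≠ 0) (hy : y ≠ 0) (hya : y + (c ^ 3 + 1) ≠ 0)
    (h1 : y⁻¹ + c * x⁻¹ = c ^ 2 + c + 1)
    (h2 : (y + (c ^ 3 + 1))⁻¹ + c⁻¹ * (x + (c ^ 3 + 1))⁻¹ = c ^ 2 + c + 1) :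
    x = c ∧ y = c ^ 3 + c ∨ x = c ^ 3 + c ^ 2 + 1 ∧ y = c ^ 3 + c + 1 := by
  rw [inv_eq_of_root hc] at h2
  field_simp at h1 h2
  exact eq_of_cleared_eqns hc (by linear_combination h1) (by linear_combination h2)

variable [DecidableEq F]

lemma swapInv_root (hc : c ^ 5 + c ^ 4 + c ^ 3 + c ^ 2 + 1 = 0) :
    swapInv c = c ^ 4 + c ^ 3 + c ^ 2 + c :=
  swapInv_eq_of_mul_eq_one (by grind) (by grind)

lemma swapInv_root_sq (hc : c ^ 5 + c ^ 4 + c ^ 3 + c ^ 2 + 1 = 0) :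
    swapInv (c ^ 2) = c ^ 3 + c ^ 2 + c + 1 :=
  swapInv_eq_of_mul_eq_one (by grind) (by grind)

lemma swapInv_root_pow_three (hc : c ^ 5 + c ^ 4 + c ^ 3 + c ^ 2 + 1 = 0) :
    swapInv (c ^ 3) = c ^ 4 + c ^ 3 + 1 :=
  swapInv_eq_of_mul_eq_one (by grind) (by grind)

lemma swapInv_root_pow_four (hc : c ^ 5 + c ^ 4 + c ^ 3 + c ^ 2 + 1 = 0) :
    swapInv (c ^ 4) = c ^ 4 + c :=
  swapInv_eq_of_mul_eq_one (by grind) (by grind)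

lemma swapInv_root_add_one (hc : c ^ 5 + c ^ 4 + c ^ 3 + c ^ 2 + 1 = 0) :
    swapInv (c + 1) = c ^ 4 + c ^ 2 :=
  swapInv_eq_of_mul_eq_one (by grind) (by grind)

lemma swapInv_root_sq_add_one (hc : c ^ 5 + c ^ 4 + c ^ 3 + c ^ 2 + 1 = 0) :
    swapInv (c ^ 2 + 1) = c ^ 3 + c ^ 2 :=
  swapInv_eq_of_mul_eq_one (by grind) (by grind)

lemma swapInv_root_pow_three_add_one (hc : c ^ 5 + c ^ 4 + c ^ 3 + c ^ 2 + 1 = 0) :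
    swapInv (c ^ 3 + 1) = c ^ 4 + c ^ 3 + c ^ 2 + 1 :=
  swapInv_eq_of_mul_eq_one (by grind) (by grind)

lemma swapInv_root_pow_three_add_self (hc : c ^ 5 + c ^ 4 + c ^ 3 + c ^ 2 + 1 = 0) :
    swapInv (c ^ 3 + c) = c ^ 2 + c :=
  swapInv_eq_of_mul_eq_one (by grind) (by grind)

lemma swapInv_root_sq_add_self_add_one (hc : c ^ 5 + c ^ 4 + c ^ 3 + c ^ 2 + 1 = 0) :
    swapInv (c ^ 2 + c + 1) = c ^ 4 + c ^ 3 + c :=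
  swapInv_eq_of_mul_eq_one (by grind) (by grind)

lemma swapInv_root_pow_three_add_self_add_one (hc : c ^ 5 + c ^ 4 + c ^ 3 + c ^ 2 + 1 = 0) :
    swapInv (c ^ 3 + c + 1) = c ^ 4 + c ^ 3 + c + 1 :=
  swapInv_eq_of_mul_eq_one (by grind) (by grind)

lemma swapInv_root_pow_three_add_sq_add_one (hc : c ^ 5 + c ^ 4 + c ^ 3 + c ^ 2 + 1 = 0) :
    swapInv (c ^ 3 + c ^ 2 + 1) = c ^ 3 + c ^ 2 + c :=
  swapInv_eq_of_mul_eq_one (by grind) (by grind)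

lemma swapInv_root_pow_four_add_self_add_one (hc : c ^ 5 + c ^ 4 + c ^ 3 + c ^ 2 + 1 = 0) :
    swapInv (c ^ 4 + c + 1) = c ^ 4 + c ^ 2 + c :=
  swapInv_eq_of_mul_eq_one (by grind) (by grind)

lemma eq_of_swapInv_eqns_of_left_special (hc : c ^ 5 + c ^ 4 + c ^ 3 + c ^ 2 + 1 = 0) {x y : F}
    (h1 : swapInv y + c * swapInv x = c ^ 2 + c + 1)
    (h2 : swapInv (y + (c ^ 3 + 1)) + c⁻¹ * swapInv (x + (c ^ 3 + 1)) = c ^ 2 + c + 1)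
    (hx : x = 0 ∨ x = 1 ∨ x + (c ^ 3 + 1) = 0 ∨ x + (c ^ 3 + 1) = 1) :
    x = c ^ 3 + 1 ∧ y = 1 := by
  rw [inv_eq_of_root hc] at h2
  rcases hx with rfl | rfl | hx | hx
  · simp only [swapInv_zero] at h1
    obtain rfl : y = c ^ 3 + c ^ 2 := by
      rw [← swapInv_root_sq_add_one hc, ← swapInv_involutive.eq_iff]
      linear_combination h1
    rw [show c ^ 3 + c ^ 2 + (c ^ 3 + 1) = c ^ 2 + 1 by ring_nf; reduce_mod_char!, zero_add,
      swapInv_root_sq_add_one hc, swapInv_root_pow_three_add_one hc] at h2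
    grind
  · simp only [swapInv_one] at h1
    obtain rfl : y = c ^ 4 + c ^ 3 + c := by
      rw [← swapInv_root_sq_add_self_add_one hc, ← swapInv_involutive.eq_iff]
      linear_combination h1
    rw [show c ^ 4 + c ^ 3 + c + (c ^ 3 + 1) = c ^ 4 + c + 1 by ring_nf; reduce_mod_char!,
      show 1 + (c ^ 3 + 1) = c ^ 3 by ring_nf; reduce_mod_char!,
      swapInv_root_pow_four_add_self_add_one hc, swapInv_root_pow_three hc] at h2
    grind
  · obtain rfl := CharTwo.add_eq_zero.mp hx
    rw [swapInv_root_pow_three_add_one hc] at h1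
    refine ⟨rfl, ?_⟩
    rw [← swapInv_zero, ← swapInv_involutive.eq_iff]
    grind
  · obtain rfl : x = c ^ 3 := by linear_combination (norm := (ring_nf; reduce_mod_char!)) hx
    rw [swapInv_root_pow_three hc] at h1
    obtain rfl : y = c ^ 4 + c ^ 3 + 1 := by
      rw [← swapInv_root_pow_three hc, ← swapInv_involutive.eq_iff]
      grind
    rw [show c ^ 4 + c ^ 3 + 1 + (c ^ 3 + 1) = c ^ 4 by ring_nf; reduce_mod_char!, hx,
      swapInv_root_pow_four hc, swapInv_one] at h2
    grind

lemma eq_of_swapInv_eqns_of_right_special (hc : c ^ 5 + c ^ 4 + c ^ 3 + c ^ 2 + 1 = 0) {x y : F}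
    (hx : x ≠ 0) (hxa : x + (c ^ 3 + 1) ≠ 0)
    (h1 : swapInv y + c * x⁻¹ = c ^ 2 + c + 1)
    (h2 : swapInv (y + (c ^ 3 + 1)) + c⁻¹ * (x + (c ^ 3 + 1))⁻¹ = c ^ 2 + c + 1)
    (hy : y = 0 ∨ y = 1 ∨ y + (c ^ 3 + 1) = 0 ∨ y + (c ^ 3 + 1) = 1) :
    x = c ^ 2 ∧ y = c ^ 3 ∨ x = c ^ 4 + c ^ 2 ∧ y = 0 := by
  rw [inv_eq_of_root hc] at h2
  rcases hy with rfl | rfl | hy | hy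
  · simp only [swapInv_zero] at h1
    exact .inr ⟨by grind, rfl⟩
  · simp only [swapInv_one] at h1
    grind
  · obtain rfl := CharTwo.add_eq_zero.mp hy
    rw [CharTwo.add_self_eq_zero, swapInv_zero] at h2
    rw [swapInv_root_pow_three_add_one hc] at h1
    grind
  · obtain rfl : y = c ^ 3 := by linear_combination (norm := (ring_nf; reduce_mod_char!)) hy
    rw [swapInv_root_pow_three hc] at h1
    exact .inl ⟨by grind, rfl⟩

def solutionPairs (c : F) : Finset (F × F) :=
  {(c, c ^ 3 + c), (c ^ 2, c ^ 3), (c ^ 3 + 1, 1), (c ^ 3 + c ^ 2 + 1, c ^ 3 + c + 1),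
    (c ^ 4 + c ^ 2, 0)}

lemma mem_solutionPairs_of_swapInv_eqns (hc : c ^ 5 + c ^ 4 + c ^ 3 + c ^ 2 + 1 = 0) {x y : F}
    (h1 : swapInv y + c * swapInv x = c ^ 2 + c + 1)
    (h2 : swapInv (y + (c ^ 3 + 1)) + c⁻¹ * swapInv (x + (c ^ 3 + 1)) = c ^ 2 + c + 1) :
    (x, y) ∈ solutionPairs c := by
  by_cases hx : x = 0 ∨ x = 1 ∨ x + (c ^ 3 + 1) = 0 ∨ x + (c ^ 3 + 1) = 1
  · obtain ⟨rfl, rfl⟩ := eq_of_swapInv_eqns_of_left_special hc h1 h2 hx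
    simp [solutionPairs]
  simp only [not_or] at hx
  obtain ⟨hx0, hx1, hxa0, hxa1⟩ := hx
  rw [swapInv_of_ne hx0 hx1] at h1
  rw [swapInv_of_ne hxa0 hxa1] at h2
  by_cases hy : y = 0 ∨ y = 1 ∨ y + (c ^ 3 + 1) = 0 ∨ y + (c ^ 3 + 1) = 1
  · rcases eq_of_swapInv_eqns_of_right_special hc hx0 hxa0 h1 h2 hy with
      ⟨rfl, rfl⟩ | ⟨rfl, rfl⟩ <;> simp [solutionPairs]
  simp only [not_or] at hy
  obtain ⟨hy0, hy1, hya0, hya1⟩ := hy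
  rw [swapInv_of_ne hy0 hy1] at h1
  rw [swapInv_of_ne hya0 hya1] at h2
  rcases eq_of_inv_eqns hc hx0 hxa0 hy0 hya0 h1 h2 with ⟨rfl, rfl⟩ | ⟨rfl, rfl⟩ <;>
    simp [solutionPairs]

lemma swapInv_eqns_of_mem_solutionPairs (hc : c ^ 5 + c ^ 4 + c ^ 3 + c ^ 2 + 1 = 0) {p : F × F}
    (h : p ∈ solutionPairs c) :
    swapInv p.2 + c * swapInv p.1 = c ^ 2 + c + 1 ∧
      swapInv (p.2 + (c ^ 3 + 1)) + c⁻¹ * swapInv (p.1 + (c ^ 3 + 1)) = c ^ 2 + c + 1 := by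
  rw [inv_eq_of_root hc]
  simp only [solutionPairs, mem_insert, mem_singleton] at h
  rcases h with rfl | rfl | rfl | rfl | rfl
  · rw [show c ^ 3 + c + (c ^ 3 + 1) = c + 1 by ring_nf; reduce_mod_char!,
      show c + (c ^ 3 + 1) = c ^ 3 + c + 1 by ring, swapInv_root_pow_three_add_self hc,
      swapInv_root hc, swapInv_root_add_one hc, swapInv_root_pow_three_add_self_add_one hc]
    constructor <;> grind
  · rw [CharTwo.add_cancel_left, show c ^ 2 + (c ^ 3 + 1) = c ^ 3 + c ^ 2 + 1 by ring,
      swapInv_root_pow_three hc, swapInv_root_sq hc, swapInv_one,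
      swapInv_root_pow_three_add_sq_add_one hc]
    constructor <;> grind
  · rw [show 1 + (c ^ 3 + 1) = c ^ 3 by ring_nf; reduce_mod_char!, CharTwo.add_self_eq_zero,
      swapInv_one, swapInv_root_pow_three_add_one hc, swapInv_root_pow_three hc, swapInv_zero]
    constructor <;> grind
  · rw [show c ^ 3 + c + 1 + (c ^ 3 + 1) = c by ring_nf; reduce_mod_char!,
      show c ^ 3 + c ^ 2 + 1 + (c ^ 3 + 1) = c ^ 2 by ring_nf; reduce_mod_char!,
      swapInv_root_pow_three_add_self_add_one hc, swapInv_root_pow_three_add_sq_add_one hc,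
      swapInv_root hc, swapInv_root_sq hc]
    constructor <;> grind
  · rw [zero_add, show c ^ 4 + c ^ 2 + (c ^ 3 + 1) = c ^ 4 + c ^ 3 + c ^ 2 + 1 by ring,
      swapInv_involutive.eq_iff.mpr (swapInv_root_add_one hc).symm,
      swapInv_involutive.eq_iff.mpr (swapInv_root_pow_three_add_one hc).symm,
      swapInv_root_pow_three_add_one hc, swapInv_zero]
    constructor <;> grind

lemma card_solutionPairs (hc : c ^ 5 + c ^ 4 + c ^ 3 + c ^ 2 + 1 = 0) :
    (solutionPairs c).card = 5 := by
  rw [solutionPairs, card_insert_of_notMem, card_insert_of_notMem, card_insert_of_notMem,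
    card_insert_of_notMem, card_singleton]
  all_goals
    simp only [mem_insert, mem_singleton, Prod.mk.injEq, not_or]
    grind

lemma filter_swapInv_eqns_eq_solutionPairs [Fintype F]
    (hc : c ^ 5 + c ^ 4 + c ^ 3 + c ^ 2 + 1 = 0) :
    ({p : F × F | swapInv p.2 + c * swapInv p.1 = c ^ 2 + c + 1 ∧
      swapInv (p.2 + (c ^ 3 + 1)) + c⁻¹ * swapInv (p.1 + (c ^ 3 + 1)) = c ^ 2 + c + 1} :
        Finset (F × F)) = solutionPairs c := by
  ext ⟨x, y⟩
  simp only [mem_filter, mem_univ, true_and]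
  exact ⟨fun h ↦ mem_solutionPairs_of_swapInv_eqns hc h.1 h.2,
    swapInv_eqns_of_mem_solutionPairs hc⟩

end Root

theorem stmt_17 (n : ℕ) (hn : 5 ≤ n) (hn5 : 5 ∣ n)
    (F : Type*) [Field F] [Fintype F] [DecidableEq F]
    (hF : Fintype.card F = 2 ^ n) :
    (∃ c : F, c ^ 5 + c ^ 4 + c ^ 3 + c ^ 2 + 1 = 0) ∧
      ∀ c : F, c ^ 5 + c ^ 4 + c ^ 3 + c ^ 2 + 1 = 0 →
        c ≠ 0 ∧ c ≠ 1 ∧ c ^ 2 + c + 1 ≠ 0 ∧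
          cBCT F n c (c / (c ^ 2 + c + 1)) (c ^ 2 + c + 1) = 5 := by
  have : CharP F 2 := charP_of_card_eq_prime_pow hF
  refine ⟨exists_root_of_card hF hn5, fun c hc ↦ ?_⟩
  have hb : c ^ 2 + c + 1 ≠ 0 := by grind
  refine ⟨by grind, by grind, hb, ?_⟩
  have ha : c / (c ^ 2 + c + 1) = c ^ 3 + 1 := div_eq_of_eq_mul hb (by grind)
  rw [ha, cBCT_eq_card_filter_swapInv hF (by omega), filter_swapInv_eqns_eq_solutionPairs hc,
    card_solutionPairs hc]
end

section
/- Let k and n be positive integers with k ≤ n. Then gcd(2^k + 1, 2^n − 1) = (2^{gcd(2k,n)} − 1)/(2^{gcd(k,n)} − 1). Consequently, if n is odd, or if n ≡ 2 (mod 4) and k is even, then gcd(2^k + 1, 2^n − 1) = 1. -/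
private lemma mod_pow_sub_one {m : ℕ} (hm : 0 < m) (n : ℕ) :
    (2 ^ n - 1) % (2 ^ m - 1) = 2 ^ (n % m) - 1 := by
  obtain ⟨t, ht⟩ := Nat.sub_dvd_pow_sub_pow (2 ^ m) 1 (n / m)
  rw [one_pow, ← pow_mul] at ht
  have h2 : (1:ℕ) ≤ 2 ^ (m * (n / m)) := Nat.one_le_two_pow
  have h3 : (1:ℕ) ≤ 2 ^ (n % m) := Nat.one_le_two_pow
  have key : 2 ^ n - 1 = (2 ^ m - 1) * (t * 2 ^ (n % m)) + (2 ^ (n % m) - 1) := by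
    have hpow : 2 ^ n = 2 ^ (m * (n / m)) * 2 ^ (n % m) := by
      rw [← pow_add, Nat.div_add_mod]
    have e1 : (2 ^ m - 1) * (t * 2 ^ (n % m)) = (2 ^ (m * (n / m)) - 1) * 2 ^ (n % m) := by
      rw [ht]; ring
    have e2 : (2 ^ (m * (n / m)) - 1) * 2 ^ (n % m) = 2 ^ n - 2 ^ (n % m) := by
      rw [Nat.sub_mul, ← hpow, one_mul]
    have hle : 2 ^ (n % m) ≤ 2 ^ n := Nat.pow_le_pow_right (by norm_num) (Nat.mod_le n m)
    omega
  rw [key, Nat.mul_add_mod]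
  apply Nat.mod_eq_of_lt
  have hlt : n % m < m := Nat.mod_lt _ hm
  have := Nat.pow_lt_pow_right (by norm_num : 1 < 2) hlt
  omega

private lemma gcd_two_pow_sub_one (m : ℕ) : ∀ n : ℕ,
    Nat.gcd (2 ^ m - 1) (2 ^ n - 1) = 2 ^ (Nat.gcd m n) - 1 := by
  induction m using Nat.strong_induction_on with
  | _ m ih =>
    intro n
    rcases Nat.eq_zero_or_pos m with rfl | hm
    · simp
    · rw [Nat.gcd_rec (2 ^ m - 1) (2 ^ n - 1), mod_pow_sub_one hm n,
        ih (n % m) (Nat.mod_lt _ hm) m, ← Nat.gcd_rec]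

theorem stmt_18 (k n : ℕ) (hk : 0 < k) (hn : 0 < n) (hkn : k ≤ n) :
    Nat.gcd (2 ^ k + 1) (2 ^ n - 1) =
      (2 ^ Nat.gcd (2 * k) n - 1) / (2 ^ Nat.gcd k n - 1) ∧
    ((Odd n ∨ (n % 4 = 2 ∧ Even k)) → Nat.gcd (2 ^ k + 1) (2 ^ n - 1) = 1) := by
  have h2k : (2:ℕ) ≤ 2 ^ k := by
    calc (2:ℕ) = 2 ^ 1 := rfl
    _ ≤ 2 ^ k := Nat.pow_le_pow_right (by norm_num) hk
  -- coprimality of 2^k - 1 and 2^k + 1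
  have hcop : Nat.Coprime (2 ^ k - 1) (2 ^ k + 1) := by
    have hodd : ¬ (2 ∣ 2 ^ k - 1) := by
      have : 2 ∣ 2 ^ k := dvd_pow_self 2 hk.ne'
      omega
    set d := Nat.gcd (2 ^ k - 1) (2 ^ k + 1) with hd
    have hdl : d ∣ 2 ^ k - 1 := Nat.gcd_dvd_left _ _
    have hdr : d ∣ 2 ^ k + 1 := Nat.gcd_dvd_right _ _
    have hd2 : d ∣ 2 := by
      have := Nat.dvd_sub hdr hdl
      have he : 2 ^ k + 1 - (2 ^ k - 1) = 2 := by omega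
      rwa [he] at this
    rcases (Nat.prime_two.eq_one_or_self_of_dvd d hd2) with h1 | h1
    · exact h1
    · exact absurd (h1 ▸ hdl) hodd
  have hmul : (2 ^ k - 1) * (2 ^ k + 1) = 2 ^ (2 * k) - 1 := by
    have : (2:ℕ) ^ (2 * k) = 2 ^ k * 2 ^ k := by rw [two_mul, pow_add]
    rw [this]
    have ha : (1:ℕ) ≤ 2 ^ k := by omega
    have hb : (1:ℕ) ≤ 2 ^ k * 2 ^ k := by nlinarith
    zify [ha, hb]
    ring
  -- key identity
  have key : (2 ^ Nat.gcd k n - 1) * Nat.gcd (2 ^ k + 1) (2 ^ n - 1)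
      = 2 ^ Nat.gcd (2 * k) n - 1 := by
    have h1 := Nat.Coprime.gcd_mul (2 ^ n - 1) hcop
    rw [hmul, Nat.gcd_comm (2 ^ n - 1) (2 ^ (2 * k) - 1), gcd_two_pow_sub_one (2 * k) n,
      Nat.gcd_comm (2 ^ n - 1) (2 ^ k - 1), gcd_two_pow_sub_one k n,
      Nat.gcd_comm (2 ^ n - 1) (2 ^ k + 1)] at h1
    exact h1.symm
  have hgpos : 0 < 2 ^ Nat.gcd k n - 1 := by
    have hg1 : 0 < Nat.gcd k n := Nat.gcd_pos_of_pos_left n hk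
    have : 2 ≤ 2 ^ Nat.gcd k n := by
      calc (2:ℕ) = 2 ^ 1 := rfl
      _ ≤ _ := Nat.pow_le_pow_right (by norm_num) hg1
    omega
  constructor
  · rw [← key, Nat.mul_div_cancel_left _ hgpos]
  · intro h
    have hgeq : Nat.gcd (2 * k) n = Nat.gcd k n := by
      rcases h with hodd | ⟨hn4, hke⟩
      · exact Nat.Coprime.gcd_mul_left_cancel k
          ((Nat.coprime_two_left).mpr hodd)
      · obtain ⟨j, rfl⟩ : ∃ j, k = 2 * j := ⟨k / 2, by
          rcases hke with ⟨r, hr⟩; omega⟩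
        obtain ⟨t, rfl⟩ : ∃ t, n = 2 * (2 * t + 1) := ⟨n / 4, by omega⟩
        have hc : Nat.Coprime 2 (2 * t + 1) := by
          rw [Nat.coprime_two_left]; exact ⟨t, by ring⟩
        rw [show 2 * (2 * j) = 2 * (2 * j) from rfl, Nat.gcd_mul_left,
          Nat.gcd_mul_left, Nat.Coprime.gcd_mul_left_cancel j hc]
    rw [hgeq] at key
    have := Nat.eq_of_mul_eq_mul_left hgpos (key.trans (mul_one _).symm)
    exact this
end
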